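/- arXiv:1209.1307 — 7 statements merged into one kernel-verified Lean document; each statement's English description precedes it below -/
import Mathlib

section
/- Suppose θ is a limit ordinal, ⟨X_i : i < θ⟩ is a ⊆-increasing sequence of sets with union X, κ₁ ≤ κ₂ ≤ |X₀| are infinite cardinals, and for each i < θ the family D_i ⊆ [X_i]^{κ₁} is dense in [X_i]^{κ₂}. Then D := ⋃_{i<θ} D_i is dense in [X]^{κ₃} for every cardinal κ₃ with κ₂ < κ₃ ≤ |X|, and if cf(θ) ≠ cf(κ₂) then D is also dense in [X]^{κ₂}. -/
/-!
Write `cf` for cofinality. It suffices to find, for `Y ⊆ ⋃_{i<θ} X_i` of the relevant size, one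
`i < θ` with `|Y ∩ X_i| ≥ κ₂`: a `κ₂`-subset of `Y ∩ X_i` then contains a member of `D_i`.
If `κ₂ < cf θ`, a `κ₂`-subset of `Y` already lies in a single `X_i`. Otherwise `κ₂` is infinite and
`Y` is the union of `cf θ` many sets `Y ∩ X_i`; if all of them had size `< κ₂`, then `|Y| ≤ κ₂`, and
when `|Y| = κ₂` the increasing cardinals `|Y ∩ X_i|` would have supremum `κ₂`, which forces
`cf θ = cf κ₂`.
-/

open Cardinal Set

universe u

theorem Order.cof_congr_of_monotone {α β : Type u} [LinearOrder α] [LinearOrder β] [NoMaxOrder β]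
    {f : α → β} (hf : Monotone f) (hf' : IsCofinal (range f)) : cof α = cof β := by
  apply le_antisymm
  · rw [le_cof_iff]
    intro s hs
    have hpre (b : s) : ∃ a, (b : β) ≤ f a := by simpa using hf' b
    choose g hg using hpre
    refine (cof_le (s := range g) fun a ↦ ?_).trans mk_range_le
    obtain ⟨b', hb'⟩ := exists_gt (f a)
    obtain ⟨b, hb, hbb'⟩ := hs b'
    exact ⟨g ⟨b, hb⟩, mem_range_self _, (hf.reflect_lt (hb'.trans_le (hbb'.trans (hg ⟨b, hb⟩)))).le⟩
  · rw [le_cof_iff]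
    exact fun s hs ↦ (cof_le (hs.image hf hf')).trans mk_image_le

theorem Ordinal.cof_eq_cof_ord_of_monotoneOn {θ : Ordinal.{u}} {κ : Cardinal.{u}} (hκ : ℵ₀ ≤ κ)
    {c : Ordinal.{u} → Cardinal.{u}} (hc : MonotoneOn c (Iio θ)) (hlt : ∀ i < θ, c i < κ)
    (hsup : ∀ μ < κ, ∃ i < θ, μ < c i) : θ.cof = κ.ord.cof := by
  have := (isSuccLimit_ord hκ).isSuccPrelimit.noMaxOrder_Iio
  let g : Iio θ → Iio κ.ord := fun i ↦ ⟨(c i).ord, ord_lt_ord.2 (hlt i i.2)⟩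
  have hg : Monotone g := fun i j hij ↦ ord_le_ord.2 (hc i.2 j.2 hij)
  have hg' : IsCofinal (range g) := by
    rintro ⟨o, ho⟩
    obtain ⟨i, hi, hoi⟩ := hsup o.card (lt_ord.1 ho)
    exact ⟨g ⟨i, hi⟩, mem_range_self _, (lt_ord.2 hoi).le⟩
  have := Order.cof_congr_of_monotone hg hg'
  rwa [cof_Iio, cof_Iio, ← lift_cof, ← lift_cof, Cardinal.lift_inj] at this

section IncreasingUnion

variable {α : Type u} {θ : Ordinal.{u}} {X : Ordinal.{u} → Set α}

theorem exists_subset_of_mk_lt_cof (hX : MonotoneOn X (Iio θ)) {Y : Set α}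
    (hY : Y ⊆ ⋃ i ∈ Iio θ, X i) (hYθ : #Y < θ.cof) : ∃ i < θ, Y ⊆ X i := by
  have hidx (y : Y) : ∃ i < θ, (y : α) ∈ X i := by simpa using hY y.2
  choose g hgθ hgX using hidx
  have hsup : ⨆ y, g y < θ := Ordinal.iSup_lt_of_lt_cof hYθ hgθ
  exact ⟨_, hsup, fun y hy ↦
    hX (hgθ ⟨y, hy⟩) hsup (Ordinal.le_iSup g ⟨y, hy⟩) (hgX ⟨y, hy⟩)⟩

theorem exists_le_mk_of_lt_cof (hX : MonotoneOn X (Iio θ)) {κ : Cardinal.{u}}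
    (hκ : κ ≤ #(⋃ i ∈ Iio θ, X i)) (hκθ : κ < θ.cof) : ∃ i < θ, κ ≤ #(X i) := by
  obtain ⟨Y, hY, rfl⟩ := le_mk_iff_exists_subset.1 hκ
  obtain ⟨i, hi, hYi⟩ := exists_subset_of_mk_lt_cof hX hY hκθ
  exact ⟨i, hi, mk_le_mk_of_subset hYi⟩

theorem mk_biUnion_le_cof_mul (hX : MonotoneOn X (Iio θ)) {μ : Cardinal.{u}}
    (hμ : ∀ i < θ, #(X i) ≤ μ) : #(⋃ i ∈ Iio θ, X i) ≤ θ.cof * μ := by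
  obtain ⟨s, hs, hsθ⟩ := Order.exists_cof_eq θ.ToType
  rw [Ordinal.cof_toType] at hsθ
  have hcover : ⋃ i ∈ Iio θ, X i ⊆ ⋃ j : s, X (Ordinal.ToType.toOrd j.1) := by
    simp only [iUnion_subset_iff]
    intro i hi
    obtain ⟨j, hj, hij⟩ := hs (Ordinal.ToType.mk ⟨i, hi⟩)
    have hij' : i ≤ Ordinal.ToType.toOrd j := Ordinal.ToType.mk.le_symm_apply.2 hij
    exact (hX hi (Ordinal.ToType.toOrd j).2 hij').trans (subset_iUnion_of_subset ⟨j, hj⟩ le_rfl)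
  calc #(⋃ i ∈ Iio θ, X i) ≤ #(⋃ j : s, X (Ordinal.ToType.toOrd j.1)) := mk_le_mk_of_subset hcover
    _ ≤ #s * ⨆ j : s, #(X (Ordinal.ToType.toOrd j.1)) := mk_iUnion_le _
    _ ≤ θ.cof * μ := by
      rw [hsθ]
      exact mul_le_mul_right (ciSup_le' fun j ↦ hμ _ (Ordinal.ToType.toOrd j.1).2) _

theorem exists_le_mk_of_lt_mk_biUnion (hθ : Order.IsSuccLimit θ) (hX : MonotoneOn X (Iio θ))
    {κ : Cardinal.{u}} (hκ : κ < #(⋃ i ∈ Iio θ, X i)) : ∃ i < θ, κ ≤ #(X i) := by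
  obtain hκθ | hθκ := lt_or_ge κ θ.cof
  · exact exists_le_mk_of_lt_cof hX hκ.le hκθ
  by_contra! hsmall
  have hκ₀ : ℵ₀ ≤ κ := (Ordinal.aleph0_le_cof_iff.2 (Ordinal.one_lt_cof_iff.2 hθ)).trans hθκ
  refine hκ.not_ge ?_
  calc #(⋃ i ∈ Iio θ, X i) ≤ θ.cof * κ := mk_biUnion_le_cof_mul hX fun i hi ↦ (hsmall i hi).le
    _ ≤ κ * κ := mul_le_mul_left hθκ κ
    _ = κ := mul_eq_self hκ₀

theorem exists_le_mk_of_mk_biUnion_eq (hθ : Order.IsSuccLimit θ) (hX : MonotoneOn X (Iio θ))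
    {κ : Cardinal.{u}} (hκ : #(⋃ i ∈ Iio θ, X i) = κ) (hcof : θ.cof ≠ κ.ord.cof) :
    ∃ i < θ, κ ≤ #(X i) := by
  obtain hκθ | hθκ | hθκ := lt_trichotomy κ θ.cof
  · exact exists_le_mk_of_lt_cof hX hκ.ge hκθ
  · exact (hcof (by rw [hθκ, Ordinal.cof_ord_cof])).elim
  by_contra! hsmall
  have hκ₀ : ℵ₀ ≤ κ := (Ordinal.aleph0_le_cof_iff.2 (Ordinal.one_lt_cof_iff.2 hθ)).trans hθκ.le
  refine hcof (Ordinal.cof_eq_cof_ord_of_monotoneOn hκ₀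
    (fun i hi j hj hij ↦ mk_le_mk_of_subset (hX hi hj hij)) hsmall fun μ hμ ↦ ?_)
  by_contra! hbound
  refine (hκ ▸ mk_biUnion_le_cof_mul hX hbound).not_gt ?_
  exact mul_lt_of_lt hκ₀ hθκ hμ

end IncreasingUnion

theorem union_of_dense_families_general {α : Type} (θ : Ordinal.{0}) (hθ : Order.IsSuccLimit θ)
    (X : Ordinal.{0} → Set α)
    (hmono : ∀ i j : Ordinal, i ≤ j → j < θ → X i ⊆ X j)
    (κ₂ : Cardinal.{0})
    (D : Ordinal.{0} → Set (Set α))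
    (hDdense : ∀ i < θ, ∀ Y ⊆ X i, #Y = κ₂ → ∃ Z ∈ D i, Z ⊆ Y) :
    (∀ κ₃ : Cardinal.{0}, κ₂ < κ₃ → κ₃ ≤ #(⋃ i ∈ Set.Iio θ, X i) →
      ∀ Y ⊆ ⋃ i ∈ Set.Iio θ, X i, #Y = κ₃ → ∃ Z ∈ ⋃ i ∈ Set.Iio θ, D i, Z ⊆ Y) ∧
    (θ.cof ≠ κ₂.ord.cof →
      ∀ Y ⊆ ⋃ i ∈ Set.Iio θ, X i, #Y = κ₂ → ∃ Z ∈ ⋃ i ∈ Set.Iio θ, D i, Z ⊆ Y) := by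
  have hYX (Y : Set α) : MonotoneOn (fun i ↦ Y ∩ X i) (Iio θ) :=
    fun i _ j hj hij ↦ inter_subset_inter_right Y (hmono i j hij hj)
  have hYunion {Y : Set α} (hY : Y ⊆ ⋃ i ∈ Iio θ, X i) : ⋃ i ∈ Iio θ, Y ∩ X i = Y := by
    rw [← inter_iUnion₂, inter_eq_left.2 hY]
  have hdense (Y : Set α) (hY : ∃ i < θ, κ₂ ≤ #(Y ∩ X i : Set α)) :
      ∃ Z ∈ ⋃ i ∈ Iio θ, D i, Z ⊆ Y := by
    obtain ⟨i, hi, hκ₂⟩ := hY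
    obtain ⟨Y', hY', rfl⟩ := le_mk_iff_exists_subset.1 hκ₂
    obtain ⟨Z, hZ, hZY'⟩ := hDdense i hi Y' (hY'.trans inter_subset_right) rfl
    exact ⟨Z, mem_biUnion hi hZ, hZY'.trans (hY'.trans inter_subset_left)⟩
  refine ⟨fun κ₃ hκ₃ _ Y hY hYκ₃ ↦ hdense Y ?_, fun hcof Y hY hYκ₂ ↦ hdense Y ?_⟩
  · exact exists_le_mk_of_lt_mk_biUnion hθ (hYX Y) (by rwa [hYunion hY, hYκ₃])
  · exact exists_le_mk_of_mk_biUnion_eq hθ (hYX Y) (by rw [hYunion hY, hYκ₂]) hcof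

theorem union_of_dense_families {α : Type} (θ : Ordinal.{0}) (hθ : Order.IsSuccLimit θ)
    (X : Ordinal.{0} → Set α)
    (hmono : ∀ i j : Ordinal, i ≤ j → j < θ → X i ⊆ X j)
    (κ₁ κ₂ : Cardinal.{0}) (hκ₁ : ℵ₀ ≤ κ₁) (hκ₁₂ : κ₁ ≤ κ₂) (hκ₂ : κ₂ ≤ #(X 0))
    (D : Ordinal.{0} → Set (Set α))
    (hDsub : ∀ i < θ, ∀ Z ∈ D i, Z ⊆ X i ∧ #Z = κ₁)
    (hDdense : ∀ i < θ, ∀ Y ⊆ X i, #Y = κ₂ → ∃ Z ∈ D i, Z ⊆ Y) :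
    (∀ κ₃ : Cardinal.{0}, κ₂ < κ₃ → κ₃ ≤ #(⋃ i ∈ Set.Iio θ, X i) →
      ∀ Y ⊆ ⋃ i ∈ Set.Iio θ, X i, #Y = κ₃ → ∃ Z ∈ ⋃ i ∈ Set.Iio θ, D i, Z ⊆ Y) ∧
    (θ.cof ≠ κ₂.ord.cof →
      ∀ Y ⊆ ⋃ i ∈ Set.Iio θ, X i, #Y = κ₂ → ∃ Z ∈ ⋃ i ∈ Set.Iio θ, D i, Z ⊆ Y) :=
  union_of_dense_families_general θ hθ X hmono κ₂ D hDdense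
end

section
/- Suppose ⟨λ_i : i < θ⟩ is an increasing sequence of cardinals with limit λ, κ₁ ≤ κ₂ ≤ λ₀ are infinite cardinals, and D(λ_i,κ₁,κ₂) ≤ λ for all i < θ. Then D(λ,κ₁,κ₃) = λ for every cardinal κ₃ with κ₂ < κ₃ ≤ λ, and if cf(λ) ≠ cf(κ₂) then also D(λ,κ₁,κ₂) = λ. -/
open Cardinal

/-- A family `D` of subsets of `α` is dense in `[α]^{κ₂}`. -/
def IsDenseIn {α : Type u} (D : Set (Set α)) (κ₂ : Cardinal.{u}) : Prop :=
  ∀ Y : Set α, #Y = κ₂ → ∃ Z ∈ D, Z ⊆ Y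

/-- The density `D(λ,κ₁,κ₂)`. -/
noncomputable def Density (l κ₁ κ₂ : Cardinal.{u}) : Cardinal.{u} :=
  sInf { c : Cardinal.{u} | ∃ D : Set (Set l.out),
    (∀ X ∈ D, #X = κ₁) ∧ IsDenseIn D κ₂ ∧ c = #D }

/-!
Well-order `λ` in order type `λ.ord`. Every proper initial segment has size `< λ`, hence
`≤ λ_i` for some `i`, so it carries a family of at most `λ` sets of size `κ₁` that is dense for
its `κ₂`-subsets; the union of these families has size `≤ λ · λ = λ` and is dense for all
bounded `κ₂`-sets. A set of size `κ₃ > κ₂` has a bounded initial segment of size `κ₂`, and a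
`κ₂`-set without one has order type `κ₂.ord` and is cofinal in `λ`, forcing `cf λ = cf κ₂`.
Conversely, fewer than `λ` sets of size `κ₁ < λ` cover fewer than `λ` points, so they miss
some `κ`-set entirely.
-/

open Set

def IsDenseOn {α : Type u} (D : Set (Set α)) (S : Set α) (κ : Cardinal.{u}) : Prop :=
  ∀ Y ⊆ S, #Y = κ → ∃ Z ∈ D, Z ⊆ Y

section Families

variable {α β : Type u} {κ κ₁ κ₂ : Cardinal.{u}}

theorem isDenseIn_setOf_mk_eq (h : κ₁ ≤ κ₂) : IsDenseIn {X : Set α | #X = κ₁} κ₂ := by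
  intro Y hY
  obtain ⟨Z, hZY, hZ⟩ := le_mk_iff_exists_subset.1 (hY ▸ h)
  exact ⟨Z, hZ, hZY⟩

theorem exists_isDenseIn_comap (f : α ↪ β) {D : Set (Set β)} (hm : ∀ X ∈ D, #X = κ₁)
    (hd : IsDenseIn D κ₂) :
    ∃ D' : Set (Set α), (∀ X ∈ D', #X = κ₁) ∧ IsDenseIn D' κ₂ ∧ #D' ≤ #D := by
  refine ⟨(f ⁻¹' ·) '' {Z ∈ D | Z ⊆ range f}, ?_, ?_, ?_⟩
  · rintro _ ⟨Z, ⟨hZD, hZf⟩, rfl⟩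
    rw [mk_preimage_of_injective_of_subset_range f Z f.injective hZf, hm Z hZD]
  · intro Y hY
    obtain ⟨Z, hZD, hZY⟩ := hd (f '' Y) (by rw [mk_image_eq f.injective, hY])
    refine ⟨f ⁻¹' Z, ⟨Z, ⟨hZD, hZY.trans (image_subset_range f Y)⟩, rfl⟩, ?_⟩
    exact (preimage_mono hZY).trans (preimage_image_eq Y f.injective).le
  · exact mk_image_le.trans (mk_le_mk_of_subset fun Z hZ => hZ.1)

theorem IsDenseIn.isDenseOn_image_val {S : Set α} {D : Set (Set S)} (hd : IsDenseIn D κ) :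
    IsDenseOn ((Subtype.val '' ·) '' D) S κ := by
  intro Y hYS hY
  obtain ⟨Z, hZD, hZY⟩ := hd (Subtype.val ⁻¹' Y) (by
    rwa [mk_preimage_of_injective_of_subset_range _ Y Subtype.val_injective (by simpa)])
  exact ⟨_, ⟨Z, hZD, rfl⟩, (image_mono hZY).trans (image_preimage_subset _ Y)⟩

theorem le_mk_of_isDenseIn {D : Set (Set α)} (hκ₁ : ℵ₀ ≤ κ₁) (hκ₁α : κ₁ < #α) (hκα : κ ≤ #α)
    (hm : ∀ X ∈ D, #X = κ₁) (hd : IsDenseIn D κ) : #α ≤ #D := by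
  by_contra! hD
  have : Infinite α := infinite_iff.2 (hκ₁.trans hκ₁α.le)
  have hU : #(⋃₀ D) < #α := calc
    #(⋃₀ D) ≤ #D * ⨆ X : D, #(X : Set α) := mk_sUnion_le D
    _ ≤ #D * κ₁ := by gcongr; exact ciSup_le' fun X => (hm X X.2).le
    _ < #α := mul_lt_of_lt (hκ₁.trans hκ₁α.le) hD hκ₁α
  obtain ⟨Y, hYU, hY⟩ := le_mk_iff_exists_subset.1 (mk_compl_of_infinite _ hU ▸ hκα)
  obtain ⟨Z, hZD, hZY⟩ := hd Y hY
  obtain ⟨x, hx⟩ : Z.Nonempty := by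
    rw [← nonempty_coe_sort, ← mk_ne_zero_iff, hm Z hZD]
    exact (aleph0_pos.trans_le hκ₁).ne'
  exact hYU (hZY hx) (mem_sUnion_of_mem hx hZD)

end Families

section Density

variable {α : Type u} {l κ κ₁ κ₂ : Cardinal.{u}}

theorem density_le_mk {D : Set (Set l.out)} (hm : ∀ X ∈ D, #X = κ₁) (hd : IsDenseIn D κ₂) :
    Density l κ₁ κ₂ ≤ #D :=
  csInf_le' ⟨D, hm, hd, rfl⟩

theorem exists_isDenseIn_mk_eq_density (h : κ₁ ≤ κ₂) :
    ∃ D : Set (Set l.out), (∀ X ∈ D, #X = κ₁) ∧ IsDenseIn D κ₂ ∧ #D = Density l κ₁ κ₂ := by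
  obtain ⟨D, hm, hd, hD⟩ := csInf_mem (s := { c : Cardinal.{u} | ∃ D : Set (Set l.out),
    (∀ X ∈ D, #X = κ₁) ∧ IsDenseIn D κ₂ ∧ c = #D })
    ⟨_, _, fun _ hX => hX, isDenseIn_setOf_mk_eq h, rfl⟩
  exact ⟨D, hm, hd, hD.symm⟩

theorem density_eq_zero_of_lt (h : l < κ₂) : Density l κ₁ κ₂ = 0 := by
  refine nonpos_iff_eq_zero.1 <|
    (density_le_mk (D := ∅) (by simp) fun Y hY => ?_).trans_eq (mk_eq_zero _)
  exact absurd (mk_out l ▸ hY ▸ mk_set_le Y) h.not_ge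

theorem density_eq_of_isDenseIn (hα : #α = l) {D : Set (Set α)} (hκ₁ : ℵ₀ ≤ κ₁) (hκ₁l : κ₁ < l)
    (hκ₁κ : κ₁ ≤ κ) (hκl : κ ≤ l) (hm : ∀ X ∈ D, #X = κ₁)
    (hd : IsDenseIn D κ) (hD : #D ≤ l) : Density l κ₁ κ = l := by
  refine le_antisymm ?_ ?_
  · obtain ⟨e⟩ : Nonempty (l.out ≃ α) := Cardinal.eq.1 (by rw [mk_out, hα])
    obtain ⟨D', hm', hd', hD'⟩ := exists_isDenseIn_comap e.toEmbedding hm hd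
    exact (density_le_mk hm' hd').trans (hD'.trans hD)
  · obtain ⟨D', hm', hd', hD'⟩ := exists_isDenseIn_mk_eq_density (l := l) hκ₁κ
    rw [← hD']
    exact (mk_out l).symm.trans_le
      (le_mk_of_isDenseIn hκ₁ (by rwa [mk_out]) (by rwa [mk_out]) hm' hd')


theorem exists_isDenseOn_of_mk_le {S : Set α} (hS : #S ≤ l) (h : κ₁ ≤ κ₂) :
    ∃ E : Set (Set α), (∀ X ∈ E, #X = κ₁) ∧ IsDenseOn E S κ₂ ∧ #E ≤ Density l κ₁ κ₂ := by
  obtain ⟨D, hm, hd, hD⟩ := exists_isDenseIn_mk_eq_density (l := l) h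
  obtain ⟨j⟩ : Nonempty (S ↪ l.out) := by rwa [← le_def, mk_out]
  obtain ⟨D', hm', hd', hD'⟩ := exists_isDenseIn_comap j hm hd
  refine ⟨(Subtype.val '' ·) '' D', ?_, hd'.isDenseOn_image_val,
    mk_image_le.trans (hD'.trans hD.le)⟩
  rintro _ ⟨X, hX, rfl⟩
  rw [mk_image_eq Subtype.val_injective, hm' X hX]

theorem exists_forall_isDenseOn {ι : Type u} (S : ι → Set α) {μ : Cardinal.{u}}
    (hS : ∀ i, ∃ c, #(S i) ≤ c ∧ Density c κ₁ κ₂ ≤ μ) (h : κ₁ ≤ κ₂) :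
    ∃ D : Set (Set α), (∀ X ∈ D, #X = κ₁) ∧ (∀ i, IsDenseOn D (S i) κ₂) ∧ #D ≤ #ι * μ := by
  choose c hc hcμ using hS
  choose E hm hd hE using fun i => exists_isDenseOn_of_mk_le (hc i) h
  refine ⟨⋃ i, E i, fun X hX => ?_, fun i Y hY hYκ => ?_, ?_⟩
  · obtain ⟨i, hX⟩ := mem_iUnion.1 hX
    exact hm i X hX
  · obtain ⟨Z, hZ, hZY⟩ := hd i Y hY hYκ
    exact ⟨Z, mem_iUnion_of_mem i hZ, hZY⟩
  · calc #(⋃ i, E i) ≤ #ι * ⨆ i, #(E i) := mk_iUnion_le E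
      _ ≤ #ι * μ := by gcongr; exact ciSup_le' fun i => (hE i).trans (hcμ i)

end Density

section WellOrder

open Ordinal Order

variable {α : Type u} [LinearOrder α] [WellFoundedLT α] {D : Set (Set α)} {κ : Cardinal.{u}}

theorem exists_mk_inter_Iio_eq {Y : Set α} (h : κ.ord < typeLT Y) :
    ∃ y, #(Y ∩ Iio y : Set α) = κ := by
  obtain ⟨v, hv⟩ := typein_surj (· < · : Y → Y → Prop) h
  have hv' : #(Iio v) = κ := by rw [← card_ord κ, ← hv, card_typein]; rfl
  have himage : Subtype.val '' Iio v = Y ∩ Iio (v : α) := by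
    ext x
    simp [← Subtype.coe_lt_coe, and_comm]
  exact ⟨v, himage ▸ (mk_image_eq Subtype.val_injective).trans hv'⟩

theorem exists_subset_of_forall_isDenseOn_Iio (hD : ∀ y, IsDenseOn D (Iio y) κ) {Y : Set α}
    (h : κ.ord < typeLT Y) : ∃ Z ∈ D, Z ⊆ Y := by
  obtain ⟨y, hy⟩ := exists_mk_inter_Iio_eq h
  obtain ⟨Z, hZ, hZY⟩ := hD y _ inter_subset_right hy
  exact ⟨Z, hZ, hZY.trans inter_subset_left⟩

theorem isDenseIn_of_forall_isDenseOn_Iio_of_lt (hD : ∀ y, IsDenseOn D (Iio y) κ)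
    {κ' : Cardinal.{u}} (h : κ < κ') : IsDenseIn D κ' := fun _ hY =>
  exists_subset_of_forall_isDenseOn_Iio hD ((ord_lt_ord.2 h).trans_le (hY ▸ ord_le_type _))

theorem isDenseIn_of_forall_isDenseOn_Iio_of_cof_ne (hD : ∀ y, IsDenseOn D (Iio y) κ)
    (h : Order.cof α ≠ κ.ord.cof) : IsDenseIn D κ := by
  intro Y hY
  rcases (hY ▸ ord_le_type (· < · : Y → Y → Prop)).lt_or_eq with hlt | heq
  · exact exists_subset_of_forall_isDenseOn_Iio hD hlt
  by_cases hY' : IsCofinal Y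
  · exact absurd (by rw [← cof_eq_of_isCofinal hY', ← cof_type, ← heq]) h
  · obtain ⟨y, hy⟩ := not_isCofinal_iff.1 hY'
    exact hD y Y hy hY

end WellOrder

theorem density_continuity_at_limits_general (θ : Ordinal.{0}) (lam : Cardinal.{0})
    (l : Ordinal.{0} → Cardinal.{0})
    (hlt : ∀ i < θ, l i < lam)
    (hlim : ∀ c : Cardinal.{0}, c < lam → ∃ i < θ, c ≤ l i)
    (κ₁ κ₂ : Cardinal.{0}) (hκ₁ : ℵ₀ ≤ κ₁) (hκ₁₂ : κ₁ ≤ κ₂) (hκ₂ : κ₂ ≤ l 0)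
    (hD : ∀ i < θ, Density (l i) κ₁ κ₂ ≤ lam) :
    (∀ κ₃ : Cardinal.{0}, κ₂ < κ₃ → κ₃ ≤ lam → Density lam κ₁ κ₃ = lam) ∧
    (lam.ord.cof ≠ κ₂.ord.cof → Density lam κ₁ κ₂ = lam) := by
  have hκ₂pos : 0 < κ₂ := aleph0_pos.trans_le (hκ₁.trans hκ₁₂)
  rcases eq_or_ne lam 0 with rfl | hlam
  · exact ⟨fun κ₃ h23 h3 => absurd (hκ₂pos.trans h23) h3.not_gt,
      fun _ => density_eq_zero_of_lt hκ₂pos⟩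
  obtain ⟨i, hi, -⟩ := hlim 0 (pos_iff_ne_zero.2 hlam)
  have hκ₂lam : κ₂ < lam := hκ₂.trans_lt (hlt 0 ((zero_le (a := i)).trans_lt hi))
  have hκ₁lam : κ₁ < lam := hκ₁₂.trans_lt hκ₂lam
  have hα : #lam.ord.ToType = lam := mk_ord_toType lam
  have hIio (y : lam.ord.ToType) : ∃ c, #(Iio y) ≤ c ∧ Density c κ₁ κ₂ ≤ lam :=
    let ⟨i, hi, hle⟩ := hlim _ ((mk_Iio_lt y (by simp)).trans_eq hα)
    ⟨l i, hle, hD i hi⟩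
  obtain ⟨D, hm, hdense, hcard⟩ := exists_forall_isDenseOn _ hIio hκ₁₂
  have hDlam : #D ≤ lam := hcard.trans (by rw [hα, mul_eq_self (hκ₁.trans hκ₁lam.le)])
  refine ⟨fun κ₃ h23 h3 => ?_, fun hcof => ?_⟩
  · exact density_eq_of_isDenseIn hα hκ₁ hκ₁lam (hκ₁₂.trans h23.le) h3 hm
      (isDenseIn_of_forall_isDenseOn_Iio_of_lt hdense h23) hDlam
  · exact density_eq_of_isDenseIn hα hκ₁ hκ₁lam hκ₁₂ hκ₂lam.le hm
      (isDenseIn_of_forall_isDenseOn_Iio_of_cof_ne hdense (by rwa [Ordinal.cof_toType])) hDlam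

theorem density_continuity_at_limits (θ : Ordinal.{0}) (lam : Cardinal.{0})
    (l : Ordinal.{0} → Cardinal.{0})
    (hincr : ∀ i j : Ordinal, i < j → j < θ → l i < l j)
    (hlt : ∀ i < θ, l i < lam)
    (hlim : ∀ c : Cardinal.{0}, c < lam → ∃ i < θ, c ≤ l i)
    (κ₁ κ₂ : Cardinal.{0}) (hκ₁ : ℵ₀ ≤ κ₁) (hκ₁₂ : κ₁ ≤ κ₂) (hκ₂ : κ₂ ≤ l 0)
    (hD : ∀ i < θ, Density (l i) κ₁ κ₂ ≤ lam) :
    (∀ κ₃ : Cardinal.{0}, κ₂ < κ₃ → κ₃ ≤ lam → Density lam κ₁ κ₃ = lam) ∧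
    (lam.ord.cof ≠ κ₂.ord.cof → Density lam κ₁ κ₂ = lam) :=
  density_continuity_at_limits_general θ lam l hlt hlim κ₁ κ₂ hκ₁ hκ₁₂ hκ₂ hD
end

section
/- If κ < μ are infinite cardinals with cf(μ) = cf(κ), then D(μ,κ) > μ. -/
open Cardinal

/-!
Let `θ = cf κ = cf μ`, so `μ` is singular, and let `D ⊆ [μ]^κ` have size at most `μ`. Cofinal
sequences of length `θ` in `μ` and in `κ` give an increasing cover `D = ⋃_{i<θ} S_i` with
`|S_i| < μ`, and a decomposition `κ = Σ_{i<θ} κ_i` whose partial sums `Σ_{j≤i} κ_j` stay below `κ`.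
As `μ` is a limit cardinal, there are disjoint blocks `C_i` with `|S_i| + κ < |C_i| < μ`.
Diagonalize: a set `A_i ⊆ C_i` of size `≤ |S_i|` meets every member of `S_i` that meets `C_i`, and
`Y = ⋃_i Y_i` with `Y_i ⊆ C_i \ A_i`, `|Y_i| = κ_i`. A member of `D` inside `Y` lies in some `S_i`,
so it meets no `C_j` with `j > i` (it would contain a point of `A_j`, which `Y` avoids), and thus
has size at most `Σ_{j≤i} κ_j < κ`.
-/

open Ordinal Order Set Function

universe u

theorem Ordinal.exists_strictMono_cofinal {o : Ordinal.{u}} (ho : IsSuccLimit o) :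
    ∃ f : o.cof.ord.ToType → Ordinal.{u},
      StrictMono f ∧ (∀ i, f i < o) ∧ ∀ a < o, ∃ i, a < f i := by
  obtain ⟨F, hF⟩ := exists_isFundamentalSeq (o := o) rfl
  refine ⟨fun i => (F (ToType.mk.symm i)).1, fun i j hij => ?_, fun i => (F _).2, fun a ha => ?_⟩
  · exact hF.strictMono (ToType.mk.symm.strictMono hij)
  · obtain ⟨_, ⟨j, rfl⟩, hj⟩ := hF.isCofinal_range ⟨succ a, ho.succ_lt ha⟩
    exact ⟨ToType.mk j, by simpa using (lt_succ a).trans_le hj⟩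

namespace Cardinal

theorem mk_sdiff_eq_of_mk_lt {α : Type u} {C A : Set α} (hC : ℵ₀ ≤ #C) (hA : #A < #C) :
    #(C \ A : Set α) = #C := by
  refine le_antisymm (mk_le_mk_of_subset sdiff_subset) (le_of_not_gt fun hlt => ?_)
  exact (le_mk_sdiff_add_mk C A).not_gt (add_lt_of_lt hC hlt hA)

theorem exists_pairwise_disjoint_mk_eq {α ι : Type u} {ν : ι → Cardinal.{u}}
    (h : sum ν ≤ #α) : ∃ C : ι → Set α, Pairwise (Disjoint on C) ∧ ∀ i, #(C i) = ν i := by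
  obtain ⟨e⟩ : Nonempty ((Σ i, (ν i).out) ↪ α) := by
    rw [← le_def]
    simpa [mk_sigma] using h
  refine ⟨fun i => range (e ∘ Sigma.mk i), fun i j hij => ?_, fun i => ?_⟩
  · rw [Function.onFun, disjoint_iff_forall_ne]
    rintro _ ⟨x, rfl⟩ _ ⟨y, rfl⟩ hxy
    exact hij (congrArg Sigma.fst (e.injective hxy))
  · rw [mk_range_eq _ (e.injective.comp sigma_mk_injective), mk_out]

theorem exists_monotone_cover_mk_lt {β ι : Type u} [Preorder ι] {μ : Cardinal.{u}} (hβ : #β ≤ μ)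
    {g : ι → Ordinal.{u}} (hg : Monotone g) (hg_lt : ∀ i, g i < μ.ord)
    (hg_cof : ∀ a < μ.ord, ∃ i, a < g i) :
    ∃ S : ι → Set β, Monotone S ∧ (∀ b, ∃ i, b ∈ S i) ∧ ∀ i, #(S i) < μ := by
  obtain ⟨φ⟩ : Nonempty (β ↪ μ.ord.ToType) := by rwa [← le_def, mk_ord_toType]
  refine ⟨fun i => φ ⁻¹' Iio (ToType.mk ⟨g i, hg_lt i⟩), fun i j hij b hb => ?_,
    fun b => ?_, fun i => ?_⟩
  · exact lt_of_lt_of_le hb (ToType.mk.monotone (Subtype.mk_le_mk.2 (hg hij)))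
  · obtain ⟨i, hi⟩ := hg_cof _ (ToType.mk.symm (φ b)).2.out
    exact ⟨i, ToType.mk.symm_apply_lt.1 (Subtype.mk_lt_mk.2 hi)⟩
  · exact (mk_preimage_of_injective _ _ φ.injective).trans_lt
      (by simpa using mk_Iio_lt (ToType.mk ⟨g i, hg_lt i⟩))

theorem exists_subset_hitting {α β : Type u} (Z : β → Set α) (S : Set β) (C : Set α) :
    ∃ A ⊆ C, #A ≤ #S ∧ ∀ b ∈ S, (Z b ∩ C).Nonempty → (Z b ∩ A).Nonempty := by
  choose p hp using fun b : {b ∈ S | (Z b ∩ C).Nonempty} => b.2.2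
  refine ⟨range p, ?_, mk_range_le.trans (mk_le_mk_of_subset (sep_subset _ _)), fun b hb hne => ?_⟩
  · rintro _ ⟨b, rfl⟩
    exact (hp b).2
  · exact ⟨p ⟨b, hb, hne⟩, (hp ⟨b, hb, hne⟩).1, mem_range_self _⟩

theorem exists_mk_eq_forall_subset_mk_lt {α β ι : Type u} [LinearOrder ι] {κ : Cardinal.{u}}
    (Z : β → Set α) {S : ι → Set β} (hS : Monotone S) (hS_cover : ∀ b, ∃ i, b ∈ S i)
    {C : ι → Set α} (hC : Pairwise (Disjoint on C)) (hC_inf : ∀ i, ℵ₀ ≤ #(C i))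
    (hSC : ∀ i, #(S i) < #(C i)) {k : ι → Cardinal.{u}} (hkC : ∀ i, k i ≤ #(C i))
    (hk : sum k = κ) (hk_Iic : ∀ i, sum (fun j : Iic i => k j.1) < κ) :
    ∃ Y : Set α, #Y = κ ∧ ∀ b, Z b ⊆ Y → #(Z b) < κ := by
  choose A hAC hAS hAZ using fun i => exists_subset_hitting Z (S i) (C i)
  have hk_le : ∀ i, k i ≤ #(C i \ A i : Set α) := fun i => by
    rw [mk_sdiff_eq_of_mk_lt (hC_inf i) ((hAS i).trans_lt (hSC i))]
    exact hkC i
  choose Y hYCA hYk using fun i => le_mk_iff_exists_subset.1 (hk_le i)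
  have hYC : ∀ i, Y i ⊆ C i := fun i => (hYCA i).trans sdiff_subset
  have hY : Pairwise (Disjoint on Y) := fun i j hij => (hC hij).mono (hYC i) (hYC j)
  refine ⟨⋃ i, Y i, by rw [mk_iUnion_eq_sum_mk hY, ← hk]; simp [hYk], fun b hb => ?_⟩
  obtain ⟨i, hi⟩ := hS_cover b
  have hZ : Z b ⊆ ⋃ j : Iic i, Y j := by
    intro x hx
    obtain ⟨j, hxj⟩ := mem_iUnion.1 (hb hx)
    refine mem_iUnion.2 ⟨⟨j, le_of_not_gt fun hij => ?_⟩, hxj⟩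
    obtain ⟨a, haZ, haA⟩ := hAZ j b (hS hij.le hi) ⟨x, hx, hYC j hxj⟩
    obtain ⟨l, hal⟩ := mem_iUnion.1 (hb haZ)
    have hlj : l = j := hC.eq (not_disjoint_iff.2 ⟨a, hYC l hal, hAC j haA⟩)
    exact (hYCA j (hlj ▸ hal)).2 haA
  calc #(Z b) ≤ #(⋃ j : Iic i, Y j) := mk_le_mk_of_subset hZ
    _ ≤ sum fun j : Iic i => #(Y j) := mk_iUnion_le_sum_mk
    _ = sum fun j : Iic i => k j.1 := by simp [hYk]
    _ < κ := hk_Iic i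

theorem sum_card_eq_of_cofinal {ι : Type u} {κ : Cardinal.{u}} (hκ : ℵ₀ ≤ κ) (hι : #ι ≤ κ)
    {f : ι → Ordinal.{u}} (hf_lt : ∀ i, f i < κ.ord) (hf_cof : ∀ a < κ.ord, ∃ i, a < f i) :
    sum (fun i => (f i).card) = κ := by
  refine le_antisymm ?_ ?_
  · calc sum (fun i => (f i).card) ≤ sum fun _ : ι => κ :=
          sum_le_sum _ _ fun i => (lt_ord.1 (hf_lt i)).le
      _ = #ι * κ := sum_const' _ _
      _ ≤ κ * κ := mul_le_mul_left hι κ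
      _ = κ := mul_eq_self hκ
  · have : κ.ord ≤ ⨆ i, f i := le_of_forall_lt fun a ha =>
      (hf_cof a ha).elim fun i hi => hi.trans_le (Ordinal.le_iSup f i)
    calc κ = κ.ord.card := (card_ord κ).symm
      _ ≤ (⨆ i, f i).card := card_le_card this
      _ ≤ _ := card_iSup_le_sum_card f

theorem sum_Iic_card_lt {ι : Type u} [LinearOrder ι] {κ : Cardinal.{u}} (hκ : ℵ₀ ≤ κ)
    (hIic : ∀ i : ι, #(Iic i) < κ) {f : ι → Ordinal.{u}} (hf : Monotone f)
    (hf_lt : ∀ i, f i < κ.ord) (i : ι) : sum (fun j : Iic i => (f j).card) < κ :=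
  calc _ ≤ sum fun _ : Iic i => (f i).card := sum_le_sum _ _ fun j => card_le_card (hf j.2)
    _ = #(Iic i) * (f i).card := sum_const' _ _
    _ < κ := mul_lt_of_lt hκ (hIic i) (lt_ord.1 (hf_lt i))

theorem exists_mk_eq_forall_subset_mk_lt_of_cof_eq {α : Type u} {κ μ : Cardinal.{u}}
    (hκ : ℵ₀ ≤ κ) (hκμ : κ < μ) (hcof : μ.ord.cof = κ.ord.cof) (hα : μ ≤ #α)
    {D : Set (Set α)} (hD : #D ≤ μ) : ∃ Y : Set α, #Y = κ ∧ ∀ Z ∈ D, Z ⊆ Y → #Z < κ := by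
  have hμ : ℵ₀ ≤ μ := hκ.trans hκμ.le
  have hθκ : κ.ord.cof ≤ κ := cof_ord_le κ
  have hμ_sing : IsSingular μ := ⟨hμ, (hcof ▸ hθκ.trans_lt hκμ).ne⟩
  obtain ⟨f, hf, hf_lt, hf_cof⟩ := exists_strictMono_cofinal (isSuccLimit_ord hκ)
  obtain ⟨g, hg, hg_lt, hg_cof⟩ : ∃ g : κ.ord.cof.ord.ToType → Ordinal.{u},
      StrictMono g ∧ (∀ i, g i < μ.ord) ∧ ∀ a < μ.ord, ∃ i, a < g i :=
    hcof ▸ exists_strictMono_cofinal (isSuccLimit_ord hμ)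
  obtain ⟨S, hS, hS_cover, hS_lt⟩ := exists_monotone_cover_mk_lt hD hg.monotone hg_lt hg_cof
  have hν : ∀ i, succ (#(S i) + κ) < μ :=
    fun i => hμ_sing.isSuccLimit.succ_lt (add_lt_of_lt hμ (hS_lt i) hκμ)
  obtain ⟨C, hC, hC_mk⟩ := exists_pairwise_disjoint_mk_eq (α := α) <|
    calc sum (fun i => succ (#(S i) + κ)) ≤ sum fun _ : κ.ord.cof.ord.ToType => μ :=
          sum_le_sum _ _ fun i => (hν i).le
      _ = κ.ord.cof * μ := by rw [sum_const', mk_ord_toType]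
      _ ≤ μ * μ := mul_le_mul_left (hθκ.trans hκμ.le) μ
      _ = μ := mul_eq_self hμ
      _ ≤ #α := hα
  have hC_big : ∀ i, #(S i) + κ < #(C i) := fun i => (hC_mk i).symm ▸ lt_succ _
  have hIic : ∀ i : κ.ord.cof.ord.ToType, #(Iic i) < κ := fun i =>
    (by simpa using mk_Iic_lt i (by simp) (by simpa using one_lt_cof_iff.2 (isSuccLimit_ord hκ)) :
      #(Iic i) < κ.ord.cof).trans_le hθκ
  obtain ⟨Y, hY, hYD⟩ := exists_mk_eq_forall_subset_mk_lt (Subtype.val : D → Set α) hS hS_cover hC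
    (fun i => hκ.trans (le_add_self.trans (hC_big i).le))
    (fun i => le_self_add.trans_lt (hC_big i))
    (fun i => (lt_ord.1 (hf_lt i)).le.trans (le_add_self.trans (hC_big i).le))
    (sum_card_eq_of_cofinal hκ (by simpa using hθκ) hf_lt hf_cof)
    (sum_Iic_card_lt hκ hIic hf.monotone hf_lt)
  exact ⟨Y, hY, fun Z hZ => hYD ⟨Z, hZ⟩⟩

end Cardinal

theorem density_gt_of_cof_eq (κ μ : Cardinal.{0}) (hκ : ℵ₀ ≤ κ) (hκμ : κ < μ)
    (hcof : μ.ord.cof = κ.ord.cof) :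
    μ < Density μ κ κ := by
  have hne : {c | ∃ D : Set (Set μ.out), (∀ X ∈ D, #X = κ) ∧ IsDenseIn D κ ∧ c = #D}.Nonempty :=
    ⟨_, {X | #X = κ}, fun X hX => hX, fun Y hY => ⟨Y, hY, subset_rfl⟩, rfl⟩
  obtain ⟨D, hD_mk, hD_dense, hD⟩ := csInf_mem hne
  rw [Density, hD]
  by_contra! hDμ
  obtain ⟨Y, hY, hYD⟩ := exists_mk_eq_forall_subset_mk_lt_of_cof_eq hκ hκμ hcof (mk_out μ).ge hDμ
  obtain ⟨Z, hZD, hZY⟩ := hD_dense Y hY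
  exact (hYD Z hZD hZY).ne (hD_mk Z hZD)
end

section
/- If μ is a strong limit cardinal and κ < μ is an infinite cardinal with cf(κ) ≠ cf(μ), then D(μ,κ) = μ. -/
/-!
Work in the well-order of type `μ`. Every `κ`-subset `Y` contains a bounded `κ`-subset: if all
the initial pieces `Y ∩ Iic b` were smaller than `κ`, their sizes would form a monotone cofinal
map into `κ`, forcing `cf κ = cf μ`. A strong limit has only `μ` bounded subsets, so these give a
dense family of size `μ`. Conversely, a dense family of size `θ < μ` restricts to a dense family
on a well-order of regular type `λ = (θ + κ)⁺ < μ`; fewer than `λ` sets of size `κ < λ` all lie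
below a single bound, and a `κ`-subset of the tail above it contains none of them.
-/

open Cardinal

open Order Set

section LinearOrder

variable {α : Type u} [LinearOrder α]

theorem exists_forall_lt_of_mk_lt_cof {s : Set α} (hs : #s < cof α) : ∃ b, ∀ x ∈ s, x < b :=
  not_isCofinal_iff.1 fun h ↦ (cof_le h).not_gt hs

theorem mk_le_mul_of_isCofinal {S : Set α} (hS : IsCofinal S) (Y : Set α) {d : Cardinal}
    (hd : ∀ s ∈ S, #(Y ∩ Iic s : Set α) ≤ d) : #Y ≤ #S * d := by
  have hcover : Y ⊆ ⋃ s : S, Y ∩ Iic (s : α) := fun y hy ↦ by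
    obtain ⟨s, hs, hys⟩ := hS y
    exact mem_iUnion.2 ⟨⟨s, hs⟩, hy, hys⟩
  calc #Y ≤ #(⋃ s : S, Y ∩ Iic (s : α)) := mk_le_mk_of_subset hcover
    _ ≤ #S * ⨆ s : S, #(Y ∩ Iic (s : α) : Set α) := mk_iUnion_le _
    _ ≤ #S * d := by gcongr; exact ciSup_le' fun s ↦ hd s s.2

theorem cof_eq_of_monotone_of_isCofinal_range {β : Type u} [LinearOrder β] [NoMaxOrder β]
    {f : α → β} (hf : Monotone f) (hf' : IsCofinal (range f)) : cof α = cof β := by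
  refine le_antisymm ?_ ?_
  · obtain ⟨S, hS, hSc⟩ := exists_cof_eq β
    have hpre (s : S) : ∃ a, (s : β) < f a := by
      obtain ⟨t, hst⟩ := exists_gt (s : β)
      obtain ⟨_, ⟨a, rfl⟩, hta⟩ := hf' t
      exact ⟨a, hst.trans_le hta⟩
    choose g hg using hpre
    refine (cof_le (s := range g) fun x ↦ ?_).trans (mk_range_le.trans hSc.le)
    obtain ⟨s, hs, hxs⟩ := hS (f x)
    refine ⟨g ⟨s, hs⟩, mem_range_self _, le_of_not_gt fun hlt ↦ ?_⟩
    exact (hg ⟨s, hs⟩).not_ge ((hf hlt.le).trans hxs)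
  · obtain ⟨S, hS, hSc⟩ := exists_cof_eq α
    exact (cof_le (hS.image hf hf')).trans (mk_image_le.trans hSc.le)

theorem cof_eq_ord_cof_of_forall_mk_inter_Iic_lt {Y : Set α} (hY : ℵ₀ ≤ #Y) (hα : cof α < #Y)
    (h : ∀ b, #(Y ∩ Iic b : Set α) < #Y) : cof α = (#Y).ord.cof := by
  have hunbdd : ∀ d < #Y, ∃ b, d < #(Y ∩ Iic b : Set α) := by
    by_contra! ⟨d, hd, hle⟩
    obtain ⟨S, hS, hSc⟩ := exists_cof_eq α
    have := mk_le_mul_of_isCofinal hS Y fun s _ ↦ hle s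
    rw [hSc] at this
    exact this.not_gt (mul_lt_of_lt hY hα hd)
  have := Cardinal.noMaxOrder hY
  rw [← Ordinal.cof_toType]
  refine cof_eq_of_monotone_of_isCofinal_range
    (f := fun b ↦ Ordinal.ToType.mk ⟨(#(Y ∩ Iic b : Set α)).ord, ord_lt_ord.2 (h b)⟩) ?_ ?_
  · intro a b hab
    refine Ordinal.ToType.mk.monotone (Subtype.mk_le_mk.2 (ord_le_ord.2 ?_))
    exact mk_le_mk_of_subset (inter_subset_inter_right _ (Iic_subset_Iic.2 hab))
  · intro x
    obtain ⟨b, hb⟩ := hunbdd _ (lt_ord.1 (mem_Iio.1 (Ordinal.ToType.mk.symm x).2))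
    refine ⟨_, mem_range_self b, ?_⟩
    rw [← Ordinal.ToType.mk.apply_symm_apply x]
    exact Ordinal.ToType.mk.monotone (Subtype.mk_le_mk.2 (lt_ord.2 hb).le)

theorem exists_le_mk_inter_Iic [WellFoundedLT α] {Y : Set α} (hY : ℵ₀ ≤ #Y)
    (hcof : (#Y).ord.cof ≠ cof α) : ∃ b, #Y ≤ #(Y ∩ Iic b : Set α) := by
  by_contra! h
  rcases lt_trichotomy (cof α) #Y with hlt | heq | hgt
  · exact hcof (cof_eq_ord_cof_of_forall_mk_inter_Iic_lt hY hlt h).symm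
  · exact hcof (heq ▸ cof_ord_cof α)
  · obtain ⟨b, hb⟩ := exists_forall_lt_of_mk_lt_cof hgt
    have hYb : Y ∩ Iic b = Y := inter_eq_self_of_subset_left fun y hy ↦ (hb y hy).le
    exact (h b).ne (by rw [hYb])

theorem cof_le_mk_of_isDenseIn {κ : Cardinal.{u}} {D : Set (Set α)} (hD : IsDenseIn D κ)
    (hne : ∀ Z ∈ D, Z.Nonempty) (hsmall : ∀ Z ∈ D, #Z < cof α) (htail : ∀ b : α, κ ≤ #(Ici b)) :
    cof α ≤ #D := by
  by_contra! hD_lt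
  choose f hf using fun Z : D ↦ exists_forall_lt_of_mk_lt_cof (hsmall Z Z.2)
  obtain ⟨b, hb⟩ := exists_forall_lt_of_mk_lt_cof (mk_range_le.trans_lt hD_lt)
  obtain ⟨Y, hYb, hY⟩ := le_mk_iff_exists_subset.1 (htail b)
  obtain ⟨Z, hZD, hZY⟩ := hD Y hY
  obtain ⟨z, hz⟩ := hne Z hZD
  exact (hYb (hZY hz)).not_gt ((hf ⟨Z, hZD⟩ z hz).trans (hb _ (mem_range_self _)))

end LinearOrder

theorem mk_Ici_toType_ord {c : Cardinal.{u}} (hc : ℵ₀ ≤ c) (b : c.ord.ToType) : #(Ici b) = c := by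
  refine le_antisymm ((mk_set_le _).trans (mk_ord_toType c).le) (le_of_not_gt fun hlt ↦ ?_)
  have hIio : #(Iio b) < c := by simpa using mk_Iio_lt b (by simp)
  have : c ≤ #(Iio b) + #(Ici b) :=
    calc c = #(Iio b ∪ Ici b : Set c.ord.ToType) := by rw [Iio_union_Ici, mk_univ, mk_ord_toType]
      _ ≤ #(Iio b) + #(Ici b) := mk_union_le _ _
  exact this.not_gt (add_lt_of_lt hc hIio hlt)

theorem IsDenseIn.exists_comap {α β : Type u} {g : α → β} (hg : Function.Injective g)
    {κ₁ κ₂ : Cardinal.{u}} {D : Set (Set β)} (hD : IsDenseIn D κ₂) (hD₁ : ∀ Z ∈ D, #Z = κ₁) :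
    ∃ D' : Set (Set α), (∀ Z ∈ D', #Z = κ₁) ∧ IsDenseIn D' κ₂ ∧ #D' ≤ #D := by
  refine ⟨(g ⁻¹' ·) '' {Z ∈ D | Z ⊆ range g}, ?_, ?_,
    mk_image_le.trans (mk_le_mk_of_subset (sep_subset _ _))⟩
  · rintro _ ⟨Z, ⟨hZD, hZg⟩, rfl⟩
    rw [mk_preimage_of_injective_of_subset_range g Z hg hZg, hD₁ Z hZD]
  · intro Y hY
    obtain ⟨Z, hZD, hZY⟩ := hD (g '' Y) (by rw [mk_image_eq hg, hY])
    refine ⟨g ⁻¹' Z, ⟨Z, ⟨hZD, hZY.trans (image_subset_range g Y)⟩, rfl⟩, ?_⟩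
    exact (preimage_mono hZY).trans (preimage_image_eq Y hg).le

theorem mk_le_mk_of_isDenseIn {α : Type u} {κ : Cardinal.{u}} {D : Set (Set α)}
    (hα : IsSuccLimit #α) (hκ : ℵ₀ ≤ κ) (hκα : κ < #α) (hD₁ : ∀ Z ∈ D, #Z = κ)
    (hD : IsDenseIn D κ) : #α ≤ #D := by
  by_contra! hD_lt
  set l := succ (max #D κ)
  have hl : l.IsRegular := isRegular_succ (le_max_of_le_right hκ)
  obtain ⟨g⟩ : Nonempty (l.ord.ToType ↪ α) := by
    rw [← le_def, mk_ord_toType]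
    exact (hα.succ_lt (max_lt hD_lt hκα)).le
  obtain ⟨D', hD'₁, hD', hD'D⟩ := hD.exists_comap g.injective hD₁
  have hκl : κ < l := (le_max_right _ _).trans_lt (lt_succ _)
  have hcof : cof l.ord.ToType = l := by rw [Ordinal.cof_toType, hl.cof_ord]
  have hne : ∀ Z ∈ D', Z.Nonempty := fun Z hZ ↦ by
    rw [← nonempty_coe_sort, ← mk_ne_zero_iff, hD'₁ Z hZ]
    exact (aleph0_pos.trans_le hκ).ne'
  have := cof_le_mk_of_isDenseIn hD' hne (fun Z hZ ↦ by rw [hD'₁ Z hZ, hcof]; exact hκl)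
    fun b ↦ (mk_Ici_toType_ord hl.aleph0_le b).ge.trans' hκl.le
  rw [hcof] at this
  exact (this.trans hD'D).not_gt ((le_max_left _ _).trans_lt (lt_succ _))

theorem Cardinal.IsStrongLimit.exists_isDenseIn_mk_le {μ κ : Cardinal.{u}} (hμ : IsStrongLimit μ)
    (hκ : ℵ₀ ≤ κ) (hcof : κ.ord.cof ≠ μ.ord.cof) :
    ∃ D : Set (Set μ.ord.ToType), (∀ Z ∈ D, #Z = κ) ∧ IsDenseIn D κ ∧ #D ≤ μ := by
  have := Cardinal.noMaxOrder hμ.aleph0_le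
  refine ⟨{Z | #Z = κ ∧ Bounded (· < ·) Z}, fun Z hZ ↦ hZ.1, fun Y hY ↦ ?_, ?_⟩
  · obtain ⟨b, hb⟩ := exists_le_mk_inter_Iic (hY ▸ hκ) (by rwa [hY, Ordinal.cof_toType])
    obtain ⟨Z, hZY, hZ⟩ := le_mk_iff_exists_subset.1 (hY ▸ hb)
    obtain ⟨c, hbc⟩ := exists_gt b
    exact ⟨Z, ⟨hZ, c, fun z hz ↦ (hZY hz).2.trans_lt hbc⟩, hZY.trans inter_subset_left⟩
  · calc #{Z : Set μ.ord.ToType | #Z = κ ∧ Bounded (· < ·) Z}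
        ≤ #{Z : Set μ.ord.ToType // Bounded (· < ·) Z} := mk_subtype_mono fun _ hZ ↦ hZ.2
      _ = μ := by
        rw [mk_bounded_subset (by simpa using hμ.isStrongPrelimit) (by simp), mk_ord_toType]

theorem density_eq_of_strong_limit (μ κ : Cardinal.{0}) (hμ : μ.IsStrongLimit)
    (hκ : ℵ₀ ≤ κ) (hκμ : κ < μ) (hcof : κ.ord.cof ≠ μ.ord.cof) :
    Density μ κ κ = μ := by
  have hμ' : IsSuccLimit #μ.out := by simpa using hμ.isSuccLimit
  have lower {D : Set (Set μ.out)} (hD₁ : ∀ Z ∈ D, #Z = κ) (hD : IsDenseIn D κ) : μ ≤ #D := by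
    simpa using mk_le_mk_of_isDenseIn hμ' hκ (by simpa using hκμ) hD₁ hD
  refine IsLeast.csInf_eq ⟨?_, fun _ ⟨D, hD₁, hD, hc⟩ ↦ hc ▸ lower hD₁ hD⟩
  obtain ⟨D, hD₁, hD, hDμ⟩ := hμ.exists_isDenseIn_mk_le hκ hcof
  obtain ⟨e⟩ : Nonempty (μ.out ≃ μ.ord.ToType) := Cardinal.eq.1 (by simp)
  obtain ⟨D', hD'₁, hD', hD'D⟩ := hD.exists_comap e.injective hD₁
  exact ⟨D', hD'₁, hD', le_antisymm (lower hD'₁ hD') (hD'D.trans hDμ)⟩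
end

section
/- Let ν be an infinite cardinal and assume the Singular Cardinals Hypothesis in the form: for every cardinal λ ≥ 2^ν, λ^ν ≤ λ⁺. Then D(λ,ν,ν⁺) = λ for every cardinal λ ≥ 2^ν. -/
open Cardinal

theorem density_of_SCH (ν : Cardinal.{0}) (hν : ℵ₀ ≤ ν)
    (hSCH : ∀ lam : Cardinal.{0}, 2 ^ ν ≤ lam → lam ^ ν ≤ Order.succ lam) :
    ∀ lam : Cardinal.{0}, 2 ^ ν ≤ lam → Density lam ν (Order.succ ν) = lam := by
  intro lam hlam
  have hνlam : ν < lam := (Cardinal.cantor ν).trans_le hlam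
  have hsucc : Order.succ ν ≤ lam := Order.succ_le_of_lt hνlam
  have hlamℵ : ℵ₀ ≤ lam := hν.trans hνlam.le
  have hν0 : ν ≠ 0 := (aleph0_pos.trans_le hν).ne'
  -- Lower bound : every admissible family has cardinality at least `lam`.
  have lower : ∀ D : Set (Set lam.out), (∀ X ∈ D, #X = ν) →
      IsDenseIn D (Order.succ ν) → lam ≤ #D := by
    intro D hcard hdense
    by_contra hlt
    push_neg at hlt
    obtain ⟨Y₀, hY₀⟩ := Cardinal.le_mk_iff_exists_set.mp
      (show Order.succ ν ≤ #(lam.out) by rw [mk_out]; exact hsucc)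
    obtain ⟨Z₀, hZ₀D, _⟩ := hdense Y₀ hY₀
    haveI : Nonempty ↥D := ⟨⟨Z₀, hZ₀D⟩⟩
    have hU : #(⋃₀ D) < lam := by
      refine lt_of_le_of_lt (Cardinal.mk_sUnion_le D) ?_
      have hsup : ⨆ s : ↥D, #(s : Set lam.out) ≤ ν :=
        ciSup_le' fun s => (hcard s s.2).le
      calc #D * ⨆ s : ↥D, #(s : Set lam.out) ≤ #D * ν := by
            exact mul_le_mul_right hsup _
        _ < lam := Cardinal.mul_lt_of_lt hlamℵ hlt hνlam
    haveI : Infinite lam.out := Cardinal.infinite_iff.mpr (by rw [mk_out]; exact hlamℵ)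
    have hcompl : #(↥(⋃₀ D)ᶜ) = lam := by
      rw [Cardinal.mk_compl_of_infinite (⋃₀ D) (by rw [mk_out]; exact hU), mk_out]
    obtain ⟨Y, hYsub, hYcard⟩ := Cardinal.le_mk_iff_exists_subset.mp
      (show Order.succ ν ≤ #(↥(⋃₀ D)ᶜ) by rw [hcompl]; exact hsucc)
    obtain ⟨Z, hZD, hZY⟩ := hdense Y hYcard
    have hZne : Nonempty ↥Z := Cardinal.mk_ne_zero_iff.mp (by rw [hcard Z hZD]; exact hν0)
    obtain ⟨⟨z, hz⟩⟩ := hZne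
    exact (hYsub (hZY hz)) ⟨Z, hZD, hz⟩
  -- Upper bound : construct a family of size at most `lam`.
  have upper : ∃ D : Set (Set lam.out),
      (∀ X ∈ D, #X = ν) ∧ IsDenseIn D (Order.succ ν) ∧ #D ≤ lam := by
    set β := lam.ord.ToType with hβdef
    have hmkβ : #β = lam := Cardinal.mk_ord_toType lam
    haveI : Nonempty β := Cardinal.mk_ne_zero_iff.mp
      (by rw [hmkβ]; exact (aleph0_pos.trans_le hlamℵ).ne')
    set D₀ : Set (Set β) := {X | #X = ν ∧ ∃ a : β, X ⊆ Set.Iic a} with hD₀def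
    -- density of D₀
    have hdense₀ : IsDenseIn D₀ (Order.succ ν) := by
      intro Y hY
      have hνY : ν ≤ #Y := by rw [hY]; exact Order.le_succ ν
      obtain ⟨Z, hZY, hZν⟩ := Cardinal.le_mk_iff_exists_subset.mp hνY
      by_cases hb : ∃ a : β, Z ⊆ Set.Iic a
      · exact ⟨Z, ⟨hZν, hb⟩, hZY⟩
      · push_neg at hb
        have hcof : ∀ b : β, ∃ z ∈ Z, b ≤ z := by
          intro b
          obtain ⟨z, hzZ, hzb⟩ := Set.not_subset.mp (hb b)
          exact ⟨z, hzZ, (not_le.mp hzb).le⟩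
        haveI : Nonempty ↥Z := Cardinal.mk_ne_zero_iff.mp (by rw [hZν]; exact hν0)
        by_contra hcon
        push_neg at hcon
        have hsmall : ∀ z : ↥Z, #(Y ∩ Set.Iic (z : β) : Set β) ≤ ν := by
          intro z
          by_contra h
          push_neg at h
          obtain ⟨W, hWsub, hWν⟩ := Cardinal.le_mk_iff_exists_subset.mp h.le
          exact (hcon W ⟨hWν, ⟨(z : β), fun w hw => (hWsub hw).2⟩⟩)
            (fun w hw => (hWsub hw).1)
        have hYcover : Y ⊆ ⋃ z : ↥Z, (Y ∩ Set.Iic (z : β)) := by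
          intro y hy
          obtain ⟨z, hzZ, hyz⟩ := hcof y
          exact Set.mem_iUnion.mpr ⟨⟨z, hzZ⟩, hy, hyz⟩
        have hYle : #Y ≤ ν := by
          calc #Y ≤ #(⋃ z : ↥Z, (Y ∩ Set.Iic (z : β)) : Set β) :=
                Cardinal.mk_le_mk_of_subset hYcover
            _ ≤ #(↥Z) * ⨆ z : ↥Z, #(Y ∩ Set.Iic (z : β) : Set β) :=
                Cardinal.mk_iUnion_le _
            _ ≤ ν * ν := mul_le_mul' hZν.le (ciSup_le' hsmall)
            _ = ν := Cardinal.mul_eq_self hν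
        rw [hY] at hYle
        exact absurd hYle (not_le.mpr (Order.lt_succ ν))
    -- size of D₀
    have hsize : #D₀ ≤ lam := by
      have key : ∀ a : β, #{X : Set β | X ⊆ Set.Iic a ∧ #X ≤ ν} ≤ lam := by
        intro a
        refine (Cardinal.mk_bounded_subset_le (Set.Iic a) ν).trans ?_
        have hIic : #(Set.Iic a) < lam := by
          rw [← Set.Iio_insert]
          exact (Cardinal.mk_insert_le).trans_lt
            (Cardinal.add_lt_of_lt hlamℵ (Cardinal.mk_Iio_ord_toType a)
              (one_lt_aleph0.trans_le hlamℵ))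
        have hmax : (max #(Set.Iic a) ℵ₀ : Cardinal) ≤ max (2 ^ ν) #(Set.Iic a) := by
          apply max_le (le_max_right _ _)
          exact le_trans (hν.trans (Cardinal.cantor ν).le) (le_max_left _ _)
        refine (Cardinal.power_le_power_right hmax).trans ?_
        rcases eq_or_lt_of_le hlam with heq | hlt2
        · have hμ : max (2 ^ ν) #(Set.Iic a) = 2 ^ ν :=
            max_eq_left (by rw [heq]; exact hIic.le)
          rw [hμ, ← Cardinal.power_mul, Cardinal.mul_eq_self hν]
          exact hlam
        · have hμ : max (2 ^ ν) #(Set.Iic a) < lam := max_lt hlt2 hIic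
          exact (hSCH _ (le_max_left _ _)).trans (Order.succ_le_of_lt hμ)
      have hcover : D₀ ⊆ ⋃ a : β, {X : Set β | X ⊆ Set.Iic a ∧ #X ≤ ν} := by
        rintro X ⟨hXν, a, hXa⟩
        exact Set.mem_iUnion.mpr ⟨a, hXa, hXν.le⟩
      calc #D₀ ≤ #(⋃ a : β, {X : Set β | X ⊆ Set.Iic a ∧ #X ≤ ν} : Set (Set β)) :=
            Cardinal.mk_le_mk_of_subset hcover
        _ ≤ #β * ⨆ a : β, #{X : Set β | X ⊆ Set.Iic a ∧ #X ≤ ν} :=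
            Cardinal.mk_iUnion_le _
        _ ≤ lam * lam := by
            rw [hmkβ]; exact mul_le_mul' le_rfl (ciSup_le' key)
        _ = lam := Cardinal.mul_eq_self hlamℵ
    -- transfer to `lam.out`
    obtain ⟨e⟩ : Nonempty (β ≃ lam.out) :=
      Cardinal.eq.mp (by rw [hmkβ, mk_out])
    refine ⟨(fun X => e '' X) '' D₀, ?_, ?_, ?_⟩
    · rintro X ⟨X₀, hX₀, rfl⟩
      rw [Cardinal.mk_image_eq e.injective]
      exact hX₀.1
    · intro Y hY
      have hY' : #(e.symm '' Y : Set β) = Order.succ ν := by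
        rw [Cardinal.mk_image_eq e.symm.injective]; exact hY
      obtain ⟨Z, hZ, hZY⟩ := hdense₀ (e.symm '' Y) hY'
      refine ⟨e '' Z, ⟨Z, hZ, rfl⟩, ?_⟩
      intro y hy
      obtain ⟨z, hz, rfl⟩ := hy
      obtain ⟨y', hy', hey⟩ := hZY hz
      rw [← hey]; simpa using hy'
    · exact Cardinal.mk_image_le.trans hsize
  obtain ⟨D, hD1, hD2, hD3⟩ := upper
  have hDlam : #D = lam := le_antisymm hD3 (lower D hD1 hD2)
  apply le_antisymm
  · exact csInf_le (OrderBot.bddBelow _) ⟨D, hD1, hD2, hDlam.symm⟩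
  · refine le_csInf ⟨lam, D, hD1, hD2, hDlam.symm⟩ ?_
    rintro c ⟨D', h1, h2, rfl⟩
    exact lower D' h1 h2
end

section
/- Let V be an infinite set, C ⊆ P(V), I a nonempty countable set, and ρ < |V| a cardinal. Suppose S_i ⊆ C for each i ∈ I and: (1) for every i ∈ I, the union of every ⊆-chain of sets from S_i belongs to C; (2) for every cardinal θ with ρ ≤ θ < |V| there exists i ∈ I such that for every A ⊆ V with |A| = θ there is D ∈ S_i with A ⊆ D ⊆ V and |D| = θ. Then V is C-filtrable. -/
/-!
Let `λ = #α` and `κ = cf λ`, and write `α` as the union of `κ` sets `F β` of size `< λ`.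
Build `D ξ` for `ξ < κ` continuously: `D (γ + 1)` is a small member of the `S`-family containing
`D γ ∪ F γ`, and limit stages are unions. If `κ = ℵ₀` there are no limit stages below `κ`, so each
successor step may use any `S i`. If `κ > ℵ₀`, then, `I` being countable, a single `S i` serves
cofinally many `θ < λ` (otherwise the supremum of countably many bounds below `λ` would be a bound
below `λ`); taking every successor stage from that `S i` makes each limit stage the union of a
chain in `S i`, hence a member of `C`.
-/

open Cardinal

/-- `⟨f β : β < κ.ord⟩` is a filtration of the type `α`: an increasing continuous
sequence of subsets of cardinality `< #α` whose union is all of `α`. -/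
def IsCardFiltration {α : Type} (κ : Cardinal.{0}) (f : Ordinal.{0} → Set α) : Prop :=
  (∀ β < κ.ord, #(f β) < #α) ∧
  (∀ β γ : Ordinal, β < γ → γ < κ.ord → f β ⊆ f γ) ∧
  (∀ β < κ.ord, Order.IsSuccLimit β → f β = ⋃ γ ∈ Set.Iio β, f γ) ∧
  (⋃ β ∈ Set.Iio κ.ord, f β) = Set.univ

open Ordinal Order Set

universe u

section TransfiniteIter

variable {α : Type u}

noncomputable def transfiniteIter (g : Ordinal.{u} → Set α → Set α) (ξ : Ordinal.{u}) : Set α :=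
  limitRecOn ξ ∅ g fun ξ _ ih => ⋃ (γ) (h : γ < ξ), ih γ h

variable (g : Ordinal.{u} → Set α → Set α)

@[simp]
theorem transfiniteIter_zero : transfiniteIter g 0 = ∅ :=
  limitRecOn_zero ..

theorem transfiniteIter_add_one (γ : Ordinal) :
    transfiniteIter g (γ + 1) = g γ (transfiniteIter g γ) :=
  limitRecOn_add_one ..

theorem transfiniteIter_of_isSuccLimit {ξ : Ordinal} (hξ : IsSuccLimit ξ) :
    transfiniteIter g ξ = ⋃ γ ∈ Iio ξ, transfiniteIter g γ := by
  rw [transfiniteIter, limitRecOn_limit _ _ _ _ hξ]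
  rfl

theorem monotone_transfiniteIter (hg : ∀ γ D, D ⊆ g γ D) : Monotone (transfiniteIter g) := by
  intro β ξ hβξ
  induction ξ using limitRecOn with
  | zero => rw [nonpos_iff_eq_zero.1 hβξ]
  | add_one γ ih =>
    rcases hβξ.lt_or_eq with hlt | rfl
    · rw [transfiniteIter_add_one]
      exact (ih (Order.lt_add_one_iff.1 hlt)).trans (hg _ _)
    · rfl
  | limit ξ hξ ih =>
    rcases hβξ.lt_or_eq with hlt | rfl
    · rw [transfiniteIter_of_isSuccLimit g hξ]
      exact subset_biUnion_of_mem (u := transfiniteIter g) hlt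
    · rfl

end TransfiniteIter

theorem mk_biUnion_Iio_lt {α : Type u} {c : Cardinal.{u}} (hc : ℵ₀ ≤ c) {f : Ordinal.{u} → Set α}
    {ξ : Ordinal.{u}} (hξ : ξ < c.ord.cof.ord) (hf : ∀ γ < ξ, #(f γ) < c) :
    #(⋃ γ ∈ Iio ξ, f γ) < c := by
  have hcard : #ξ.ToType < c.ord.cof := by rwa [mk_toType, ← lt_ord]
  rw [biUnion_eq_iUnion, ← (ToType.mk (o := ξ)).symm.surjective.iUnion_comp]
  refine (mk_iUnion_le _).trans_lt (mul_lt_of_lt hc (hcard.trans_le (cof_ord_le c)) ?_)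
  exact iSup_lt_of_lt_cof_ord hcard fun i => hf _ (ToType.mk.symm i).2

theorem exists_small_cover_indexed_by_cof (α : Type u) [Infinite α] :
    ∃ F : Ordinal.{u} → Set α, (∀ β, #(F β) < #α) ∧ ∀ x, ∃ β < (#α).ord.cof.ord, x ∈ F β := by
  obtain ⟨s, hs, hst⟩ := exists_ord_cof_eq (#α).ord.ToType
  rw [cof_toType] at hst
  obtain ⟨e⟩ : Nonempty (α ≃ (#α).ord.ToType) := Cardinal.eq.1 (by simp)
  classical
  refine ⟨fun β => if h : β < typeLT s then e.symm '' Iic (enum (α := s) (· < ·) ⟨β, h⟩).1 else ∅,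
    fun β => ?_, fun x => ?_⟩
  · dsimp only
    split_ifs
    · refine mk_image_le.trans_lt ?_
      simpa using mk_Iic_lt (enum (α := s) (· < ·) ⟨β, _⟩).1 (by simp) (by simp)
    · simp [pos_iff_ne_zero]
  · obtain ⟨t, ht, hxt⟩ := hs (e x)
    have hβ := typein_lt_type (α := s) (· < ·) ⟨t, ht⟩
    refine ⟨_, hst ▸ hβ, ?_⟩
    simp only [dif_pos hβ]
    rw [enum_typein]
    exact ⟨e x, hxt, e.symm_apply_apply x⟩

section Construction

variable {α : Type u}

-- The fallback `B` keeps the map inflationary, so the iteration below is monotone outright.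
open Classical in
noncomputable def smallSupersetIn (Q : Set (Set α)) (B : Set α) : Set α :=
  if h : ∃ D ∈ Q, B ⊆ D ∧ #D < #α then h.choose else B

theorem subset_smallSupersetIn (Q : Set (Set α)) (B : Set α) : B ⊆ smallSupersetIn Q B := by
  unfold smallSupersetIn
  split_ifs with h
  exacts [h.choose_spec.2.1, subset_rfl]

theorem smallSupersetIn_spec {Q : Set (Set α)} {B : Set α}
    (h : ∃ D ∈ Q, B ⊆ D ∧ #D < #α) :
    smallSupersetIn Q B ∈ Q ∧ #(smallSupersetIn Q B) < #α := by
  rw [smallSupersetIn, dif_pos h]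
  exact ⟨h.choose_spec.1, h.choose_spec.2.2⟩

noncomputable def filtrationStage (Q : Set (Set α)) (F : Ordinal.{u} → Set α) :
    Ordinal.{u} → Set α :=
  transfiniteIter fun γ D => smallSupersetIn Q (D ∪ F γ)

variable (Q : Set (Set α)) (F : Ordinal.{u} → Set α)

theorem monotone_filtrationStage : Monotone (filtrationStage Q F) :=
  monotone_transfiniteIter _ fun _ _ => subset_union_left.trans (subset_smallSupersetIn _ _)

theorem subset_filtrationStage_add_one (γ : Ordinal) : F γ ⊆ filtrationStage Q F (γ + 1) := by
  rw [filtrationStage, transfiniteIter_add_one]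
  exact subset_union_right.trans (subset_smallSupersetIn _ _)

theorem filtrationStage_eq_sUnion_of_isSuccLimit {ξ : Ordinal} (hξ : IsSuccLimit ξ) :
    filtrationStage Q F ξ = ⋃₀ range fun γ : Iio ξ => filtrationStage Q F (γ + 1) := by
  rw [filtrationStage, transfiniteIter_of_isSuccLimit _ hξ, sUnion_range]
  refine (iUnion₂_subset fun γ hγ => ?_).antisymm (iUnion_subset fun γ => ?_)
  · exact (monotone_filtrationStage Q F le_self_add).trans
      (subset_iUnion_of_subset ⟨γ, hγ⟩ subset_rfl)
  · exact subset_biUnion_of_mem (u := filtrationStage Q F) (hξ.add_one_lt γ.2)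

variable [Infinite α] {Q F}
  (hF : ∀ β, #(F β) < #α) (hstep : ∀ B : Set α, #B < #α → ∃ D ∈ Q, B ⊆ D ∧ #D < #α)
include hF hstep

theorem filtrationStage_add_one_spec {γ : Ordinal} (hγ : #(filtrationStage Q F γ) < #α) :
    filtrationStage Q F (γ + 1) ∈ Q ∧ #(filtrationStage Q F (γ + 1)) < #α := by
  rw [filtrationStage, transfiniteIter_add_one]
  exact smallSupersetIn_spec <| hstep _ <|
    (mk_union_le _ _).trans_lt (add_lt_of_lt (aleph0_le_mk α) hγ (hF γ))

theorem mk_filtrationStage_lt {ξ : Ordinal} (hξ : ξ < (#α).ord.cof.ord) :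
    #(filtrationStage Q F ξ) < #α := by
  induction ξ using limitRecOn with
  | zero => simp [filtrationStage, pos_iff_ne_zero]
  | add_one γ ih =>
    exact (filtrationStage_add_one_spec hF hstep (ih ((lt_add_one γ).trans hξ))).2
  | limit ξ hlim ih =>
    rw [filtrationStage, transfiniteIter_of_isSuccLimit _ hlim]
    exact mk_biUnion_Iio_lt (aleph0_le_mk α) hξ fun γ hγ => ih γ hγ (hγ.trans hξ)

theorem filtrationStage_mem {C : Set (Set α)} (hQC : Q ⊆ C) (hempty : ∅ ∈ C)
    (hchain : ℵ₀ < (#α).ord.cof → ∀ T ⊆ Q, IsChain (· ⊆ ·) T → ⋃₀ T ∈ C)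
    {ξ : Ordinal} (hξ : ξ < (#α).ord.cof.ord) : filtrationStage Q F ξ ∈ C := by
  induction ξ using limitRecOn with
  | zero => simpa [filtrationStage] using hempty
  | add_one γ _ =>
    exact hQC (filtrationStage_add_one_spec hF hstep
      (mk_filtrationStage_lt hF hstep ((lt_add_one γ).trans hξ))).1
  | limit ξ hlim _ =>
    have hcof : ℵ₀ < (#α).ord.cof := by
      simpa using lt_ord.1 ((omega0_le_of_isSuccLimit hlim).trans_lt hξ)
    rw [filtrationStage_eq_sUnion_of_isSuccLimit Q F hlim]
    refine hchain hcof _ ?_ ?_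
    · rintro _ ⟨γ, rfl⟩
      exact (filtrationStage_add_one_spec hF hstep
        (mk_filtrationStage_lt hF hstep (γ.2.trans hξ))).1
    · refine Monotone.isChain_range fun a b (h : (a : Ordinal) ≤ b) => ?_
      exact monotone_filtrationStage Q F (add_le_add_left h 1)

end Construction

theorem exists_filtration_of_small_supersets {α : Type} [Infinite α] {C : Set (Set α)}
    {Q : Set (Set α)} (hQC : Q ⊆ C) (hempty : ∅ ∈ C)
    (hstep : ∀ B : Set α, #B < #α → ∃ D ∈ Q, B ⊆ D ∧ #D < #α)
    -- chains are only needed at limit stages, and there are none below `cf #α = ℵ₀`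
    (hchain : ℵ₀ < (#α).ord.cof → ∀ T ⊆ Q, IsChain (· ⊆ ·) T → ⋃₀ T ∈ C) :
    ∃ (κ : Cardinal.{0}) (f : Ordinal.{0} → Set α),
      (∀ β < κ.ord, f β ∈ C) ∧ IsCardFiltration κ f := by
  obtain ⟨F, hF, hcov⟩ := exists_small_cover_indexed_by_cof α
  have hlim : IsSuccLimit (#α).ord.cof.ord :=
    isSuccLimit_ord (aleph0_le_cof_iff.2 (one_lt_cof_iff.2 (isSuccLimit_ord (aleph0_le_mk α))))
  refine ⟨(#α).ord.cof, filtrationStage Q F,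
    fun β hβ => filtrationStage_mem hF hstep hQC hempty hchain hβ,
    fun β => mk_filtrationStage_lt hF hstep, fun β γ h _ => monotone_filtrationStage Q F h.le,
    fun β _ hβ => transfiniteIter_of_isSuccLimit _ hβ, eq_univ_of_forall fun x => ?_⟩
  obtain ⟨β, hβ, hx⟩ := hcov x
  exact mem_biUnion (hlim.add_one_lt hβ) (subset_filtrationStage_add_one Q F β hx)

theorem exists_index_cofinal_of_aleph0_lt_cof {I : Type u} [Countable I] {c ρ : Cardinal.{u}}
    {P : I → Cardinal.{u} → Prop} (hc : ℵ₀ < c.ord.cof) (hρ : ρ < c)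
    (h : ∀ θ, ρ ≤ θ → θ < c → ∃ i, P i θ) : ∃ i, ∀ ν < c, ∃ θ, ν ≤ θ ∧ θ < c ∧ P i θ := by
  by_contra! hbad
  choose ν hν hνbad using hbad
  have hsup : (⨆ i, ν i) ⊔ ρ < c :=
    max_lt (iSup_lt_of_lt_cof_ord (mk_le_aleph0.trans_lt hc) hν) hρ
  obtain ⟨i, hi⟩ := h _ le_sup_right hsup
  exact hνbad i _ ((le_ciSup Cardinal.bddAbove_of_small i).trans le_sup_left) hsup hi

theorem exists_superset_mk_eq {α : Type u} {B : Set α} {θ : Cardinal.{u}} (hθ : ℵ₀ ≤ θ)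
    (hB : #B ≤ θ) (hθα : θ ≤ #α) : ∃ A, B ⊆ A ∧ #A = θ := by
  obtain ⟨P, hP⟩ := le_mk_iff_exists_set.1 hθα
  refine ⟨B ∪ P, subset_union_left, le_antisymm ?_ ?_⟩
  · exact (mk_union_le _ _).trans (add_le_of_le hθ hB hP.le)
  · exact hP ▸ mk_le_mk_of_subset subset_union_right

def CoversAt {α : Type u} (S : Set (Set α)) (θ : Cardinal.{u}) : Prop :=
  ∀ A : Set α, #A = θ → ∃ D ∈ S, A ⊆ D ∧ #D = θ

theorem exists_small_superset_of_coversAt_cofinal {α : Type u} {S : Set (Set α)} (hα : ℵ₀ < #α)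
    (hS : ∀ ν < #α, ∃ θ, ν ≤ θ ∧ θ < #α ∧ CoversAt S θ) {B : Set α} (hB : #B < #α) :
    ∃ D ∈ S, B ⊆ D ∧ #D < #α := by
  obtain ⟨θ, hνθ, hθα, hθ⟩ := hS (#B ⊔ ℵ₀) (max_lt hB hα)
  obtain ⟨A, hBA, hA⟩ :=
    exists_superset_mk_eq (le_sup_right.trans hνθ) (le_sup_left.trans hνθ) hθα.le
  obtain ⟨D, hD, hAD, hDθ⟩ := hθ A hA
  exact ⟨D, hD, hBA.trans hAD, hDθ ▸ hθα⟩

theorem exists_small_superset_mem_iUnion {α : Type u} [Infinite α] {I : Type*}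
    {S : I → Set (Set α)} {ρ : Cardinal.{u}} (hρ : ρ < #α)
    (hcover : ∀ θ, ρ ≤ θ → θ < #α → ∃ i, CoversAt (S i) θ) {B : Set α} (hB : #B < #α) :
    ∃ D ∈ ⋃ i, S i, B ⊆ D ∧ #D < #α := by
  obtain ⟨P, hP⟩ := le_mk_iff_exists_set.1 hρ.le
  have hsmall : #(B ∪ P : Set α) < #α :=
    (mk_union_le _ _).trans_lt (add_lt_of_lt (aleph0_le_mk α) hB (hP ▸ hρ))
  obtain ⟨i, hi⟩ := hcover _ (hP ▸ mk_le_mk_of_subset subset_union_right) hsmall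
  obtain ⟨D, hD, hsub, hDc⟩ := hi _ rfl
  exact ⟨D, mem_iUnion.2 ⟨i, hD⟩, subset_union_left.trans hsub, hDc ▸ hsmall⟩

theorem filtrable_of_chains {α : Type} [Infinite α] (C : Set (Set α))
    (I : Type) [Countable I] [Nonempty I] (S : I → Set (Set α))
    (hS : ∀ i, S i ⊆ C) (ρ : Cardinal.{0}) (hρ : ρ < #α)
    (hchain : ∀ i, ∀ T ⊆ S i, IsChain (· ⊆ ·) T → ⋃₀ T ∈ C)
    (hcover : ∀ θ : Cardinal.{0}, ρ ≤ θ → θ < #α → ∃ i, ∀ A : Set α, #A = θ →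
      ∃ D ∈ S i, A ⊆ D ∧ #D = θ) :
    ∃ (κ : Cardinal.{0}) (f : Ordinal.{0} → Set α),
      (∀ β < κ.ord, f β ∈ C) ∧ IsCardFiltration κ f := by
  have hempty : ∅ ∈ C := by
    simpa using hchain (Classical.arbitrary I) ∅ (empty_subset _) IsChain.empty
  rcases le_or_gt (#α).ord.cof ℵ₀ with hcof | hcof
  · exact exists_filtration_of_small_supersets (iUnion_subset hS) hempty
      (fun _ => exists_small_superset_mem_iUnion hρ hcover) fun h => absurd h hcof.not_gt
  · obtain ⟨i, hi⟩ := exists_index_cofinal_of_aleph0_lt_cof hcof hρ hcover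
    exact exists_filtration_of_small_supersets (hS i) hempty
      (fun _ => exists_small_superset_of_coversAt_cofinal (hcof.trans_le (cof_ord_le _)) hi)
      fun _ => hchain i
end

section
/- Let F be a ρ-uniform family of sets satisfying condition C(ρ⁺,ν) for some infinite cardinal ν < ρ, and let V = ⋃F. If ν ≤ κ ≤ ρ ≤ θ are cardinals with D(θ,κ) = θ, then for every U ⊆ V with |U| = θ it holds that |{A ∈ F : |A ∩ U| ≥ κ}| ≤ θ. -/
open Cardinal

/-- `F` satisfies condition `C(θ,ν)`: every subfamily of cardinality `θ` has
intersection of cardinality `< ν`. -/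
def CondC {α : Type u} (F : Set (Set α)) (θ ν : Cardinal.{u}) : Prop :=
  ∀ G ⊆ F, #G = θ → #(⋂₀ G) < ν

theorem few_large_traces {α : Type} (F : Set (Set α)) (ρ ν : Cardinal.{0})
    (hν : ℵ₀ ≤ ν) (hνρ : ν < ρ)
    (huniform : ∀ A ∈ F, #A = ρ) (hC : CondC F (Order.succ ρ) ν)
    (κ θ : Cardinal.{0}) (hνκ : ν ≤ κ) (hκρ : κ ≤ ρ) (hρθ : ρ ≤ θ)
    (hdens : Density θ κ κ = θ) :
    ∀ U : Set α, U ⊆ ⋃₀ F → #U = θ →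
      #({ A ∈ F | κ ≤ #(↥(A ∩ U)) } : Set (Set α)) ≤ θ := by
  intro U _hU hUcard
  have hθinf : ℵ₀ ≤ θ := hν.trans (hνρ.le.trans hρθ)
  have hθ0 : θ ≠ 0 := ne_of_gt (aleph0_pos.trans_le hθinf)
  -- extract a dense family
  have hne : { c : Cardinal.{0} | ∃ D : Set (Set θ.out),
      (∀ X ∈ D, #X = κ) ∧ IsDenseIn D κ ∧ c = #D }.Nonempty := by
    by_contra h
    rw [Set.not_nonempty_iff_eq_empty] at h
    unfold Density at hdens
    rw [h, Cardinal.sInf_empty] at hdens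
    exact hθ0 hdens.symm
  have hmem := csInf_mem hne
  rw [show sInf { c : Cardinal.{0} | ∃ D : Set (Set θ.out),
      (∀ X ∈ D, #X = κ) ∧ IsDenseIn D κ ∧ c = #D } = Density θ κ κ from rfl, hdens] at hmem
  obtain ⟨D, hDcard, hDdense, hDeq⟩ := hmem
  -- equivalence between θ.out and U
  have hUeq : #(↥U) = #θ.out := by rw [hUcard, mk_out]
  obtain ⟨e⟩ := Cardinal.eq.mp hUeq.symm
  -- push forward
  set push : Set θ.out → Set α := fun Z => Subtype.val '' (e '' Z) with hpush
  have hpushcard : ∀ Z : Set θ.out, #(push Z) = #Z := by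
    intro Z
    rw [hpush]
    simp only
    rw [Cardinal.mk_image_eq Subtype.val_injective, Cardinal.mk_image_eq e.injective]
  have hpushU : ∀ Z : Set θ.out, push Z ⊆ U := by
    intro Z x hx
    obtain ⟨y, _, rfl⟩ := hx
    exact y.2
  -- key: few members of F contain a fixed set of size ≥ ν
  have hkey : ∀ W : Set α, ν ≤ #W → #({A ∈ F | W ⊆ A} : Set (Set α)) ≤ ρ := by
    intro W hW
    by_contra h
    push_neg at h
    have hsucc : Order.succ ρ ≤ #({A ∈ F | W ⊆ A} : Set (Set α)) := Order.succ_le_of_lt h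
    obtain ⟨G, hGsub, hGcard⟩ := Cardinal.le_mk_iff_exists_subset.mp hsucc
    have hGF : G ⊆ F := fun A hA => (hGsub hA).1
    have := hC G hGF hGcard
    have hWsub : W ⊆ ⋂₀ G := Set.subset_sInter fun A hA => (hGsub hA).2
    exact absurd (hW.trans (Cardinal.mk_le_mk_of_subset hWsub)) (not_le.mpr this)
  -- choice: for each A in the target set pick Z ∈ D with push Z ⊆ A
  set S : Set (Set α) := { A ∈ F | κ ≤ #(↥(A ∩ U)) } with hS
  have hchoice : ∀ A : ↥S, ∃ Z ∈ D, push Z ⊆ (A : Set α) := by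
    rintro ⟨A, hAF, hAκ⟩
    obtain ⟨T, hTsub, hTcard⟩ := Cardinal.le_mk_iff_exists_subset.mp hAκ
    -- pull T back to θ.out
    set Y : Set θ.out := e ⁻¹' (Subtype.val ⁻¹' T) with hY
    have hpushY : push Y = T := by
      rw [hpush]
      simp only
      rw [hY, Equiv.image_preimage]
      rw [Set.image_preimage_eq_inter_range, Subtype.range_coe]
      exact Set.inter_eq_left.mpr (hTsub.trans Set.inter_subset_right)
    have hYcard : #Y = κ := by
      rw [← hpushcard Y, hpushY, hTcard]
    obtain ⟨Z, hZD, hZY⟩ := hDdense Y hYcard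
    refine ⟨Z, hZD, ?_⟩
    have : push Z ⊆ push Y := fun x hx => by
      obtain ⟨y, hy, rfl⟩ := hx
      obtain ⟨u, hu, rfl⟩ := hy
      exact ⟨e u, Set.mem_image_of_mem e (hZY hu), rfl⟩
    rw [hpushY] at this
    exact this.trans (hTsub.trans Set.inter_subset_left)
  choose g hgD hgsub using hchoice
  -- S is covered by fibers
  have hcover : S ⊆ ⋃ Z : ↥D, {A ∈ F | push ↑Z ⊆ A} := by
    intro A hA
    refine Set.mem_iUnion.mpr ⟨⟨g ⟨A, hA⟩, hgD ⟨A, hA⟩⟩, hA.1, hgsub ⟨A, hA⟩⟩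
  have hsum : #(↥S) ≤ #(↥D) * ⨆ Z : ↥D, #({A ∈ F | push ↑Z ⊆ A} : Set (Set α)) := by
    refine le_trans (Cardinal.mk_le_mk_of_subset hcover) ?_
    exact Cardinal.mk_iUnion_le _
  have hsup : (⨆ Z : ↥D, #({A ∈ F | push ↑Z ⊆ A} : Set (Set α))) ≤ ρ := by
    refine ciSup_le' fun Z => ?_
    apply hkey
    rw [hpushcard, hDcard _ Z.2]
    exact hνκ
  calc #(↥S) ≤ #(↥D) * ⨆ Z : ↥D, #({A ∈ F | push ↑Z ⊆ A} : Set (Set α)) := hsum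
    _ ≤ θ * ρ := mul_le_mul' (le_of_eq hDeq.symm) hsup
    _ ≤ θ * θ := mul_le_mul' le_rfl hρθ
    _ = θ := Cardinal.mul_eq_self hθinf
end
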